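/- For fixed real α, the function β ↦ I(α, β) = ∫₀¹ (c(x)^{α+1}·x^{−β} + c(1−x)^{α+1}·(1−x)^{−β} − 1)·(x(1−x))^{−3/2} dx is strictly increasing on (−∞, 2α + 3/2), tends to −∞ as β → −∞, and tends to +∞ as β → (2α + 3/2)⁻; consequently there exists a unique β(α) ∈ (−∞, 2α+3/2) with I(α, β(α)) = 0. -/

import Mathlib

/-- The limiting split function `c(x) = x²(3-2x)`. -/
def cfun (x : ℝ) : ℝ := x ^ 2 * (3 - 2 * x)

/-- The multifractal integral `I(α,β)`. -/
noncomputable def Ifun (α β : ℝ) : ℝ :=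
  ∫ x in Set.Ioo (0 : ℝ) 1,
    (cfun x ^ (α + 1) * x ^ (-β) + cfun (1 - x) ^ (α + 1) * (1 - x) ^ (-β) - 1) *
      (x * (1 - x)) ^ (-(3 / 2) : ℝ)

/-!
For `x ∈ (0,1)` the integrand is strictly increasing in `β`, whence strict monotonicity. Near
`x = 0` it equals `(3 - 2x)^(α+1) (1-x)^(-3/2) x^(2α + 1/2 - β)` plus a term of size `O(x^(-1/2))`,
because `y ↦ c(y)^(α+1) y^(-β)` is Lipschitz near `y = 1` and equals `1` there; with the symmetry
`x ↔ 1 - x` the integrand is therefore integrable exactly when `β < 2α + 3/2`. Both limits come from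
Fatou's lemma: as `β → -∞` the integrand decreases to `-(x(1-x))^(-3/2)`, and as `β → 2α + 3/2` it
increases to the integrand at the critical exponent, and neither limit is integrable. Continuity
(dominated convergence between two values of `β`) and the intermediate value theorem give the zero.
-/

open Set Filter Topology MeasureTheory Real

section Integration

variable {X : Type*} [MeasurableSpace X] {μ : Measure X}

theorem setIntegral_lt_setIntegral {s : Set X} {f g : X → ℝ} (hs : MeasurableSet s)
    (hμs : μ s ≠ 0) (hf : IntegrableOn f s μ) (hg : IntegrableOn g s μ)
    (hlt : ∀ x ∈ s, f x < g x) : ∫ x in s, f x ∂μ < ∫ x in s, g x ∂μ := by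
  rw [← sub_pos, ← integral_sub hg hf]
  refine (setIntegral_pos_iff_support_of_nonneg_ae (f := g - f)
    (ae_restrict_of_forall_mem hs fun x hx => sub_nonneg.2 (hlt x hx).le) (hg.sub hf)).2 ?_
  have hsupp : s ⊆ Function.support (g - f) := fun x hx => (sub_pos.2 (hlt x hx)).ne'
  rwa [inter_eq_right.2 hsupp, pos_iff_ne_zero]

theorem tendsto_integral_atTop_of_not_integrable {ι : Type*} {l : Filter ι}
    [l.IsCountablyGenerated] [l.NeBot] {f : ι → X → ℝ} {F g : X → ℝ}
    (hf : ∀ i, AEStronglyMeasurable (f i) μ) (hg : Integrable g μ)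
    (hgf : ∀ᶠ i in l, Integrable (f i) μ ∧ g ≤ᵐ[μ] f i)
    (hlim : ∀ᵐ x ∂μ, Tendsto (fun i => f i x) l (𝓝 (F x))) (hF : ¬ Integrable F μ) :
    Tendsto (fun i => ∫ x, f i x ∂μ) l atTop := by
  refine tendsto_atTop.2 fun M => ?_
  by_contra hM
  refine hF ?_
  suffices Integrable (fun x => F x - g x) μ from
    (this.add hg).congr (ae_of_all _ fun x => sub_add_cancel (F x) (g x))
  refine ⟨(aestronglyMeasurable_of_tendsto_ae l hf hlim).sub hg.1, ?_⟩
  have hbound : ∃ᶠ i in l, ∫⁻ x, ‖f i x - g x‖ₑ ∂μ ≤ ENNReal.ofReal (M - ∫ x, g x ∂μ) := by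
    refine (hgf.and_frequently (not_eventually.1 hM)).mono fun i ⟨⟨hfi, hle⟩, hi⟩ => ?_
    rw [← ofReal_integral_norm_eq_lintegral_enorm (f := fun x => f i x - g x) (hfi.sub hg)]
    refine ENNReal.ofReal_le_ofReal ?_
    calc ∫ x, ‖f i x - g x‖ ∂μ = ∫ x, (f i x - g x) ∂μ :=
          integral_congr_ae (hle.mono fun x hx => Real.norm_of_nonneg (sub_nonneg.2 hx))
      _ ≤ M - ∫ x, g x ∂μ := by rw [integral_sub hfi hg]; linarith [not_le.1 hi]
  calc ∫⁻ x, ‖F x - g x‖ₑ ∂μ = ∫⁻ x, liminf (fun i => ‖f i x - g x‖ₑ) l ∂μ :=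
        lintegral_congr_ae <|
          hlim.mono fun x hx => ((hx.sub_const (g x)).enorm.liminf_eq).symm
    _ ≤ liminf (fun i => ∫⁻ x, ‖f i x - g x‖ₑ ∂μ) l :=
        lintegral_liminf_le' fun i => ((hf i).sub hg.1).enorm
    _ ≤ ENNReal.ofReal (M - ∫ x, g x ∂μ) := liminf_le_of_frequently_le' hbound
    _ < ⊤ := ENNReal.ofReal_lt_top

theorem continuousOn_integral_of_monotone {F : ℝ → X → ℝ} {s : Set ℝ} (hs : IsOpen s)
    (hint : ∀ β ∈ s, Integrable (F β) μ) (hmono : ∀ᵐ x ∂μ, Monotone fun β => F β x)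
    (hcont : ∀ᵐ x ∂μ, Continuous fun β => F β x) :
    ContinuousOn (fun β => ∫ x, F β x ∂μ) s := by
  intro β₀ hβ₀
  obtain ⟨a, b, hab, hnhds, hsub⟩ := exists_Icc_mem_subset_of_mem_nhds (hs.mem_nhds hβ₀)
  have ha : a ∈ s := hsub ⟨le_rfl, hab.1.trans hab.2⟩
  have hb : b ∈ s := hsub ⟨hab.1.trans hab.2, le_rfl⟩
  refine ContinuousAt.continuousWithinAt <|
    continuousAt_of_dominated (bound := fun x => |F a x| + |F b x|) ?_ ?_
      ((hint a ha).abs.add (hint b hb).abs) (hcont.mono fun x hx => hx.continuousAt)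
  · filter_upwards [hnhds] with β hβ using (hint β (hsub hβ)).1
  · filter_upwards [hnhds] with β hβ
    filter_upwards [hmono] with x hx
    rw [Real.norm_eq_abs]
    exact (abs_le_max_abs_abs (hx hβ.1) (hx hβ.2)).trans
      (max_le_add_of_nonneg (abs_nonneg _) (abs_nonneg _))

end Integration

theorem MeasureTheory.IntegrableOn.continuousOn_mul_Ioo {f h : ℝ → ℝ} {a b : ℝ}
    (hf : IntegrableOn f (Ioo a b)) (hh : ContinuousOn h (Icc a b)) :
    IntegrableOn (fun x => h x * f x) (Ioo a b) := by
  rw [← integrableOn_Icc_iff_integrableOn_Ioo] at hf ⊢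
  exact hf.continuousOn_mul hh isCompact_Icc

theorem integrableOn_Ioo_mul_rpow_iff {g : ℝ → ℝ} {a p : ℝ} (ha : 0 < a)
    (hg : ContinuousOn g (Icc 0 a)) (hg0 : ∀ x ∈ Icc 0 a, g x ≠ 0) :
    IntegrableOn (fun x => g x * x ^ p) (Ioo 0 a) ↔ -1 < p := by
  rw [← intervalIntegral.integrableOn_Ioo_rpow_iff ha]
  refine ⟨fun h => ?_, fun h => h.continuousOn_mul_Ioo hg⟩
  refine (h.continuousOn_mul_Ioo (hg.inv₀ hg0)).congr_fun (fun x hx => ?_) measurableSet_Ioo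
  simp [hg0 x (Ioo_subset_Icc_self hx)]

theorem integrableOn_Ioo_of_symm {f : ℝ → ℝ} {a b : ℝ} (hab : a ≤ b)
    (hsymm : ∀ x, f (a + b - x) = f x) (hf : IntegrableOn f (Ioo a ((a + b) / 2))) :
    IntegrableOn f (Ioo a b) := by
  rw [← intervalIntegrable_iff_integrableOn_Ioo_of_le (by linarith)] at hf
  rw [← intervalIntegrable_iff_integrableOn_Ioo_of_le hab]
  have hrefl := (hf.comp_sub_left (a + b)).symm
  simp only [hsymm] at hrefl
  exact hf.trans (by convert hrefl using 1 <;> ring)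

theorem cfun_pos {y : ℝ} (h0 : 0 < y) (h1 : y < 3 / 2) : 0 < cfun y := by
  unfold cfun
  have : 0 < 3 - 2 * y := by linarith
  positivity

theorem cfun_one : cfun 1 = 1 := by norm_num [cfun]

namespace Ifun

variable {α β x y : ℝ}

noncomputable def term (α β y : ℝ) : ℝ := cfun y ^ (α + 1) * y ^ (-β)

noncomputable def integrand (α β x : ℝ) : ℝ :=
  (term α β x + term α β (1 - x) - 1) * (x * (1 - x)) ^ (-(3 / 2) : ℝ)

theorem term_one : term α β 1 = 1 := by simp [term, cfun_one]

theorem strictMono_term (h0 : 0 < y) (h1 : y < 1) : StrictMono fun β => term α β y :=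
  fun _ _ h => mul_lt_mul_of_pos_left (rpow_lt_rpow_of_exponent_gt h0 h1 (neg_lt_neg h))
    (rpow_pos_of_pos (cfun_pos h0 (by linarith)) _)

theorem tendsto_term_atBot (h0 : 0 < y) (h1 : y < 1) :
    Tendsto (fun β => term α β y) atBot (𝓝 0) := by
  have h := ((tendsto_rpow_atTop_of_base_lt_one y (by linarith) h1).comp
    tendsto_neg_atBot_atTop).const_mul (cfun y ^ (α + 1))
  rwa [mul_zero] at h

theorem exists_lipschitz_term (α β : ℝ) :
    ∃ C, ∀ y ∈ Icc (1 / 2 : ℝ) 1, |term α β y - 1| ≤ C * (1 - y) := by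
  have hpos : ∀ y ∈ Icc (1 / 2 : ℝ) 1, 0 < y := fun y hy => by linarith [hy.1]
  have hC1 : ContDiffOn ℝ 1 (term α β) (Icc (1 / 2) 1) :=
    (ContDiffOn.rpow_const_of_ne (by unfold cfun; fun_prop)
      fun y hy => (cfun_pos (hpos y hy) (by linarith [hy.2])).ne').mul
      (contDiffOn_id.rpow_const_of_ne fun y hy => (hpos y hy).ne')
  obtain ⟨K, hK⟩ := hC1.exists_lipschitzOnWith one_ne_zero (convex_Icc _ _) isCompact_Icc
  refine ⟨K, fun y hy => ?_⟩
  have := hK.dist_le_mul y hy 1 ⟨by norm_num, le_rfl⟩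
  rwa [term_one, Real.dist_eq, Real.dist_eq, abs_of_nonpos (by linarith [hy.2] : y - 1 ≤ 0),
    neg_sub] at this

theorem term_mul_weight (h0 : 0 < x) (h1 : x < 1) :
    term α β x * (x * (1 - x)) ^ (-(3 / 2) : ℝ) =
      (3 - 2 * x) ^ (α + 1) * (1 - x) ^ (-(3 / 2) : ℝ) * x ^ (2 * α + 1 / 2 - β) := by
  have hx : x ^ (2 * α + 1 / 2 - β) = (x ^ 2) ^ (α + 1) * x ^ (-β) * x ^ (-(3 / 2) : ℝ) := by
    rw [← rpow_natCast, ← rpow_mul h0.le, ← rpow_add h0, ← rpow_add h0]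
    congr 1
    push_cast
    ring
  rw [hx, term, cfun, mul_rpow (sq_nonneg x) (by linarith), mul_rpow h0.le (by linarith)]
  ring

theorem integrand_one_sub : integrand α β (1 - x) = integrand α β x := by
  unfold integrand
  rw [sub_sub_cancel, mul_comm (1 - x) x]
  ring

theorem measurable_integrand (α β : ℝ) : Measurable (integrand α β) := by
  unfold integrand term cfun
  fun_prop

theorem strictMono_integrand (hx : x ∈ Ioo 0 1) : StrictMono fun β => integrand α β x :=
  fun _ _ h => mul_lt_mul_of_pos_right
    (by linarith [strictMono_term (α := α) hx.1 hx.2 h,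
      strictMono_term (α := α) (y := 1 - x) (by linarith [hx.2]) (by linarith [hx.1]) h])
    (rpow_pos_of_pos (mul_pos hx.1 (by linarith [hx.2])) _)

theorem continuous_integrand (hx : x ∈ Ioo 0 1) : Continuous fun β => integrand α β x := by
  have h0 : x ≠ 0 := hx.1.ne'
  have h1 : 1 - x ≠ 0 := by linarith [hx.2]
  unfold integrand term
  fun_prop (disch := assumption)

theorem tendsto_integrand_atBot (hx : x ∈ Ioo 0 1) :
    Tendsto (fun β => integrand α β x) atBot (𝓝 (-(x * (1 - x)) ^ (-(3 / 2) : ℝ))) := by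
  have h := (((tendsto_term_atBot (α := α) hx.1 hx.2).add
    (tendsto_term_atBot (α := α) (y := 1 - x) (by linarith [hx.2]) (by linarith [hx.1]))).sub_const
    1).mul_const ((x * (1 - x)) ^ (-(3 / 2) : ℝ))
  rwa [zero_add, zero_sub, neg_one_mul] at h

theorem integrableOn_remainder (α β : ℝ) :
    IntegrableOn (fun x => (term α β (1 - x) - 1) * (x * (1 - x)) ^ (-(3 / 2) : ℝ))
      (Ioo 0 (1 / 2)) := by
  obtain ⟨C, hC⟩ := exists_lipschitz_term α β
  have hsqrt : IntegrableOn (fun x : ℝ => x ^ (-(1 / 2) : ℝ)) (Ioo 0 (1 / 2)) :=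
    (intervalIntegral.integrableOn_Ioo_rpow_iff (by norm_num)).2 (by norm_num)
  have hbound : IntegrableOn (fun x => C * (1 - x) ^ (-(3 / 2) : ℝ) * x ^ (-(1 / 2) : ℝ))
      (Ioo 0 (1 / 2)) :=
    hsqrt.continuousOn_mul_Ioo (continuousOn_const.mul (ContinuousOn.rpow_const (by fun_prop)
      fun x hx => Or.inl (by linarith [hx.2])))
  refine hbound.mono' ((by unfold term cfun; fun_prop : Measurable _).aestronglyMeasurable)
    (ae_restrict_of_forall_mem measurableSet_Ioo fun x hx => ?_)
  have h0 := hx.1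
  have h1 : 0 < 1 - x := by linarith [hx.2]
  have hlip : |term α β (1 - x) - 1| ≤ C * x := by
    simpa using hC (1 - x) ⟨by linarith [hx.2], by linarith⟩
  calc ‖(term α β (1 - x) - 1) * (x * (1 - x)) ^ (-(3 / 2) : ℝ)‖
      = |term α β (1 - x) - 1| * (x * (1 - x)) ^ (-(3 / 2) : ℝ) := by
        rw [norm_mul, Real.norm_eq_abs, Real.norm_of_nonneg (by positivity)]
    _ ≤ C * x * (x * (1 - x)) ^ (-(3 / 2) : ℝ) := by gcongr
    _ = C * (1 - x) ^ (-(3 / 2) : ℝ) * x ^ (-(1 / 2) : ℝ) := by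
      rw [mul_rpow h0.le h1.le, show (-(1 / 2) : ℝ) = 1 + -(3 / 2) by norm_num, rpow_add h0,
        rpow_one]
      ring

theorem integrableOn_integrand_Ioo_half_iff :
    IntegrableOn (integrand α β) (Ioo 0 (1 / 2)) ↔ β < 2 * α + 3 / 2 := by
  have hsplit : EqOn (integrand α β)
      ((fun x => (3 - 2 * x) ^ (α + 1) * (1 - x) ^ (-(3 / 2) : ℝ) * x ^ (2 * α + 1 / 2 - β)) +
        fun x => (term α β (1 - x) - 1) * (x * (1 - x)) ^ (-(3 / 2) : ℝ)) (Ioo 0 (1 / 2)) :=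
    fun x hx => by
      rw [Pi.add_apply, ← term_mul_weight hx.1 (by linarith [hx.2]), integrand]
      ring
  rw [integrableOn_congr_fun hsplit measurableSet_Ioo, IntegrableOn,
    integrable_add_iff_integrable_left (integrableOn_remainder α β), ← IntegrableOn,
    integrableOn_Ioo_mul_rpow_iff (by norm_num) ?_ ?_]
  · constructor <;> intro h <;> linarith
  · refine ContinuousOn.mul (ContinuousOn.rpow_const (by fun_prop) fun x hx => Or.inl ?_)
      (ContinuousOn.rpow_const (by fun_prop) fun x hx => Or.inl ?_) <;> linarith [hx.2]
  · intro x hx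
    have : 0 < 3 - 2 * x := by linarith [hx.2]
    have : 0 < 1 - x := by linarith [hx.2]
    positivity

theorem integrableOn_integrand (hβ : β < 2 * α + 3 / 2) :
    IntegrableOn (integrand α β) (Ioo 0 1) :=
  integrableOn_Ioo_of_symm zero_le_one (fun x => by simpa using integrand_one_sub)
    (by simpa using integrableOn_integrand_Ioo_half_iff.2 hβ)

theorem not_integrableOn_integrand_critical :
    ¬ IntegrableOn (integrand α (2 * α + 3 / 2)) (Ioo 0 1) := fun h =>
  lt_irrefl _ <|
    integrableOn_integrand_Ioo_half_iff.1 (h.mono_set (Ioo_subset_Ioo_right (by norm_num)))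

theorem not_integrableOn_weight :
    ¬ IntegrableOn (fun x : ℝ => (x * (1 - x)) ^ (-(3 / 2) : ℝ)) (Ioo 0 1) := by
  intro h
  have h' : IntegrableOn (fun x : ℝ => (1 - x) ^ (-(3 / 2) : ℝ) * x ^ (-(3 / 2) : ℝ))
      (Ioo 0 (1 / 2)) :=
    (h.mono_set (Ioo_subset_Ioo_right (by norm_num))).congr_fun
      (fun x hx => by dsimp only; rw [mul_rpow hx.1.le (by linarith [hx.2]), mul_comm])
      measurableSet_Ioo
  have := (integrableOn_Ioo_mul_rpow_iff (by norm_num)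
    (ContinuousOn.rpow_const (by fun_prop) fun x hx => Or.inl (by linarith [hx.2]))
    fun x hx => (rpow_pos_of_pos (by linarith [hx.2]) _).ne').1 h'
  norm_num at this

end Ifun

open Ifun

theorem Ifun_strictMonoOn (α : ℝ) : StrictMonoOn (Ifun α) (Iio (2 * α + 3 / 2)) :=
  fun _ h₁ _ h₂ h => setIntegral_lt_setIntegral measurableSet_Ioo (by simp)
    (integrableOn_integrand h₁) (integrableOn_integrand h₂) fun _ hx => strictMono_integrand hx h

theorem continuousOn_Ifun (α : ℝ) : ContinuousOn (Ifun α) (Iio (2 * α + 3 / 2)) :=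
  continuousOn_integral_of_monotone (F := integrand α) isOpen_Iio
    (fun _ hβ => integrableOn_integrand hβ)
    (ae_restrict_of_forall_mem measurableSet_Ioo fun _ hx => (strictMono_integrand hx).monotone)
    (ae_restrict_of_forall_mem measurableSet_Ioo fun _ hx => continuous_integrand hx)

theorem tendsto_Ifun_atBot (α : ℝ) : Tendsto (Ifun α) atBot atBot := by
  have h := tendsto_integral_atTop_of_not_integrable (μ := volume.restrict (Ioo 0 1))
    (l := atBot) (f := fun β x => -integrand α β x) (g := fun x => -integrand α (2 * α) x)
    (fun β => (measurable_integrand α β).neg.aestronglyMeasurable)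
    (integrableOn_integrand (by linarith)).neg
    (by
      filter_upwards [eventually_le_atBot (2 * α)] with β hβ
      exact ⟨(integrableOn_integrand (by linarith)).neg, ae_restrict_of_forall_mem measurableSet_Ioo
        fun x hx => neg_le_neg ((strictMono_integrand hx).monotone hβ)⟩)
    (ae_restrict_of_forall_mem measurableSet_Ioo fun x hx => by
      simpa using (tendsto_integrand_atBot (α := α) hx).neg)
    not_integrableOn_weight
  simp only [integral_neg] at h
  exact tendsto_neg_atTop_iff.1 h

theorem tendsto_Ifun_nhdsLT (α : ℝ) : Tendsto (Ifun α) (𝓝[<] (2 * α + 3 / 2)) atTop :=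
  tendsto_integral_atTop_of_not_integrable (f := integrand α) (g := integrand α (2 * α))
    (fun β => (measurable_integrand α β).aestronglyMeasurable)
    (integrableOn_integrand (by linarith))
    (by
      filter_upwards [Ioo_mem_nhdsLT (show 2 * α < 2 * α + 3 / 2 by linarith)] with β hβ
      exact ⟨integrableOn_integrand hβ.2, ae_restrict_of_forall_mem measurableSet_Ioo
        fun x hx => (strictMono_integrand hx).monotone hβ.1.le⟩)
    (ae_restrict_of_forall_mem measurableSet_Ioo fun _ hx =>
      ((continuous_integrand hx).tendsto _).mono_left nhdsWithin_le_nhds)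
    not_integrableOn_integrand_critical

theorem Ifun_strictMono_and_limits (α : ℝ) :
    StrictMonoOn (Ifun α) (Set.Iio (2 * α + 3 / 2)) ∧
    Filter.Tendsto (Ifun α) Filter.atBot Filter.atBot ∧
    Filter.Tendsto (Ifun α) (nhdsWithin (2 * α + 3 / 2) (Set.Iio (2 * α + 3 / 2)))
      Filter.atTop ∧
    ∃! β, β ∈ Set.Iio (2 * α + 3 / 2) ∧ Ifun α β = 0 := by
  have hmono := Ifun_strictMonoOn α
  have hbot := tendsto_Ifun_atBot α
  have htop := tendsto_Ifun_nhdsLT α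
  refine ⟨hmono, hbot, htop, ?_⟩
  obtain ⟨a, hIa, haB⟩ :=
    ((hbot.eventually_le_atBot 0).and (eventually_lt_atBot (2 * α + 3 / 2))).exists
  obtain ⟨b, hIb, hab, hbB⟩ := ((htop.eventually_ge_atTop 0).and (Ioo_mem_nhdsLT haB)).exists
  obtain ⟨β, hβ, hβ0⟩ := intermediate_value_Icc hab.le
    ((continuousOn_Ifun α).mono fun _ hx => hx.2.trans_lt hbB) ⟨hIa, hIb⟩
  exact ⟨β, ⟨hβ.2.trans_lt hbB, hβ0⟩,
    fun γ hγ => hmono.injOn hγ.1 (hβ.2.trans_lt hbB) (hγ.2.trans hβ0.symm)⟩
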